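/- arXiv:1210.7447 — 3 statements merged into one kernel-verified Lean document; each statement's English description precedes it below -/
import Mathlib

section
/- Let A and B be N×N real matrices satisfying e^{hA} = e^{hB} for some h > 0. If every eigenvalue λ of A and of B satisfies |Im λ| < π/h, then A = B. -/
/-!
On the generalized eigenspace `V_μ(M)` of a complex matrix `M`, `M - μ` is nilpotent and
`exp M = e^μ · exp (M - μ)`, so `V_μ(M)` lies in the generalized eigenspace of `exp M` for `e^μ`.
When `exp` is injective on the spectrum, the generalized eigenspaces of `M` for different
eigenvalues land in those of `exp M` for different values; as both families decompose the whole
space, `V_μ(A) = V_{e^μ}(exp A) = V_{e^μ}(exp B) = V_μ(B)`. On this common subspace the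
nilpotent parts of `A - μ` and `B - μ` have the same exponential, and a truncated series of
`log (1 + x)` recovers a nilpotent element from its exponential. Real matrices are handled by
complexification, after rescaling by `h`.
-/

open Finset Module NormedSpace Set
open scoped Nat

namespace Polynomial

noncomputable def expTrunc (D : ℕ) : ℚ[X] := ∑ k ∈ range D, C (k ! : ℚ)⁻¹ * X ^ k

noncomputable def logOneAddTrunc (D : ℕ) : ℚ[X] :=
  ∑ k ∈ range D, C ((-1) ^ k / (k + 1) : ℚ) * X ^ (k + 1)

theorem X_pow_succ_dvd_of_X_pow_dvd_derivative {R : Type*} [Semiring R] [IsAddTorsionFree R]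
    {p : R[X]} {n : ℕ} (h₀ : p.coeff 0 = 0) (h : X ^ n ∣ derivative p) : X ^ (n + 1) ∣ p := by
  rw [X_pow_dvd_iff] at h ⊢
  rintro (_ | d) hd
  · exact h₀
  · have := h d (by omega)
    rwa [coeff_derivative, ← Nat.cast_succ, ← nsmul_eq_mul',
      nsmul_eq_zero_iff_right d.succ_ne_zero] at this

theorem derivative_expTrunc_succ (D : ℕ) : derivative (expTrunc (D + 1)) = expTrunc D := by
  rw [expTrunc, derivative_sum, sum_range_succ', expTrunc]
  simp only [pow_zero, mul_one, derivative_C, add_zero, derivative_C_mul_X_pow,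
    Nat.add_sub_cancel]
  refine sum_congr rfl fun k _ => ?_
  rw [Nat.factorial_succ]
  push_cast
  congr 1
  field_simp

theorem derivative_logOneAddTrunc (D : ℕ) :
    derivative (logOneAddTrunc D) = ∑ k ∈ range D, (-X) ^ k := by
  rw [logOneAddTrunc, derivative_sum]
  refine sum_congr rfl fun k _ => ?_
  have hc : ((-1) ^ k / (k + 1) * ((k + 1 : ℕ) : ℚ)) = (-1) ^ k := by
    push_cast
    field_simp
  rw [derivative_C_mul_X_pow, Nat.add_sub_cancel, hc, neg_pow (X : ℚ[X]), C_pow, C_neg, C_1]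

theorem coeff_zero_expTrunc {D : ℕ} (hD : D ≠ 0) : (expTrunc D).coeff 0 = 1 := by
  simp [expTrunc, coeff_X_pow, hD]

theorem X_pow_dvd_logOneAddTrunc_comp_expTrunc_sub_one (D : ℕ) :
    X ^ D ∣ (logOneAddTrunc D).comp (expTrunc D - 1) - X := by
  obtain _ | m := D
  · simp
  set x := expTrunc (m + 1) - 1
  have hx : X ∣ x := by
    rw [X_dvd_iff, coeff_sub, coeff_zero_expTrunc m.succ_ne_zero, coeff_one_zero, sub_self]
  -- For `E = expTrunc (m + 1)` and `L = logOneAddTrunc (m + 1)`: `L' (x) * (1 + x) =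
  -- 1 - (-x) ^ (m + 1)` and `E' = E - X ^ m / m!`, so `X ^ m` divides `(L.comp x - X)'`.
  apply X_pow_succ_dvd_of_X_pow_dvd_derivative
  · rw [coeff_sub, coeff_X_zero, sub_zero, coeff_zero_eq_eval_zero, eval_comp,
      ← coeff_zero_eq_eval_zero, X_dvd_iff.mp hx, logOneAddTrunc]
    simp [eval_finsetSum]
  · have hgeom : (∑ k ∈ range (m + 1), (-x) ^ k) * expTrunc (m + 1) = 1 - (-x) ^ (m + 1) := by
      simpa [x] using geom_sum_mul_neg (-x) (m + 1)
    have hE : derivative x = expTrunc (m + 1) - C (m ! : ℚ)⁻¹ * X ^ m := by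
      rw [derivative_sub, derivative_one, sub_zero, derivative_expTrunc_succ, expTrunc,
        expTrunc, sum_range_succ, add_sub_cancel_right]
    rw [derivative_sub, derivative_comp, derivative_logOneAddTrunc, derivative_X]
    have hS : (∑ k ∈ range (m + 1), (-X) ^ k).comp x = ∑ k ∈ range (m + 1), (-x) ^ k := by
      simp only [comp_eq_aeval, map_sum, map_pow, map_neg, aeval_X]
    have hx' : X ^ m ∣ (-x) ^ (m + 1) :=
      (pow_dvd_pow X m.le_succ).trans (pow_dvd_pow_of_dvd hx.neg_right _)
    have hsplit : derivative x * (∑ k ∈ range (m + 1), (-x) ^ k) - 1 =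
        -(-x) ^ (m + 1) - X ^ m * (C (m ! : ℚ)⁻¹ * ∑ k ∈ range (m + 1), (-x) ^ k) := by
      linear_combination hE * (∑ k ∈ range (m + 1), (-x) ^ k) + hgeom
    rw [hS, hsplit]
    exact hx'.neg_right.sub (dvd_mul_right _ _)

end Polynomial

namespace IsNilpotent

open Polynomial

variable {A : Type*} [Ring A] [Algebra ℚ A]

theorem exp_eq_aeval_expTrunc {a : A} {D : ℕ} (h : a ^ D = 0) :
    exp a = aeval a (expTrunc D) := by
  simp [exp_eq_sum h, expTrunc, Algebra.smul_def]

theorem aeval_logOneAddTrunc_exp_sub_one {a : A} {D : ℕ} (h : a ^ D = 0) :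
    aeval (exp a - 1) (logOneAddTrunc D) = a := by
  obtain ⟨c, hc⟩ := X_pow_dvd_logOneAddTrunc_comp_expTrunc_sub_one D
  rw [exp_eq_aeval_expTrunc h, ← map_one (aeval a : ℚ[X] →ₐ[ℚ] A), ← map_sub, ← aeval_comp,
    sub_eq_iff_eq_add.mp hc, map_add, map_mul, map_pow, aeval_X, h, zero_mul, zero_add]

theorem exp_injOn : InjOn exp {a : A | IsNilpotent a} := by
  rintro a ⟨m, ha⟩ b ⟨n, hb⟩ hab
  rw [← aeval_logOneAddTrunc_exp_sub_one (pow_eq_zero_of_le (le_max_left m n) ha), hab,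
    aeval_logOneAddTrunc_exp_sub_one (pow_eq_zero_of_le (le_max_right m n) hb)]

end IsNilpotent

theorem Complex.exp_injOn_abs_im_lt_pi : InjOn exp {z : ℂ | |z.im| < Real.pi} := by
  intro x hx y hy h
  rw [← log_exp (abs_lt.mp hx).1 (abs_lt.mp hx).2.le, h,
    log_exp (abs_lt.mp hy).1 (abs_lt.mp hy).2.le]

namespace Module.End

variable {K V : Type*} [Field K] [IsAlgClosed K] [AddCommGroup V] [Module K V]
  [FiniteDimensional K V]

theorem maxGenEigenspace_le_of_forall_le_maxGenEigenspace_comp {f g : End K V} {e : K → K}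
    (hfg : ∀ μ, f.maxGenEigenspace μ ≤ g.maxGenEigenspace (e μ)) {μ₀ : K}
    (he : ∀ μ, f.HasEigenvalue μ → e μ = e μ₀ → μ = μ₀) :
    g.maxGenEigenspace (e μ₀) ≤ f.maxGenEigenspace μ₀ := by
  -- Split `v` along `f.maxGenEigenspace μ₀ ⊔ ⨆ μ ≠ μ₀, f.maxGenEigenspace μ`: the second
  -- component lies both in `g.maxGenEigenspace (e μ₀)` and in `⨆ c ≠ e μ₀, g.maxGenEigenspace c`.
  intro v hv
  have hv' : v ∈ ⨆ μ, f.maxGenEigenspace μ := by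
    rw [iSup_maxGenEigenspace_eq_top]
    trivial
  rw [iSup_split_single _ μ₀] at hv'
  obtain ⟨u, hu, w, hw, rfl⟩ := Submodule.mem_sup.mp hv'
  suffices w = 0 by rwa [this, add_zero]
  have hle : ⨆ (μ) (_ : μ ≠ μ₀), f.maxGenEigenspace μ ≤
      ⨆ (c) (_ : c ≠ e μ₀), g.maxGenEigenspace c := by
    refine iSup₂_le fun μ hμ => ?_
    by_cases hbot : f.maxGenEigenspace μ = ⊥
    · exact hbot ▸ bot_le
    have hμ' : f.HasEigenvalue μ := (hasUnifEigenvalue_iff_hasUnifEigenvalue_one (by simp)).mp hbot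
    exact (hfg μ).trans (le_iSup₂_of_le (e μ) (fun h => hμ (he μ hμ' h)) le_rfl)
  have hw_self : w ∈ g.maxGenEigenspace (e μ₀) := by
    simpa using Submodule.sub_mem _ hv (hfg μ₀ hu)
  exact Submodule.disjoint_def.mp (iSupIndep_def.mp g.independent_maxGenEigenspace _) w
    hw_self (hle hw)

end Module.End

namespace Matrix

variable {ι : Type*} [Fintype ι] [DecidableEq ι]

theorem exp_mulVec_of_pow_mulVec_eq_zero {N : Matrix ι ι ℂ} {v : ι → ℂ} {k : ℕ}
    (h : N ^ k *ᵥ v = 0) : exp N *ᵥ v = ∑ i ∈ range k, (i ! : ℚ)⁻¹ • (N ^ i *ᵥ v) := by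
  open scoped Norms.Operator in
  have hexp : HasSum (fun i => ((i ! : ℂ)⁻¹ • N ^ i) *ᵥ v) (exp N *ᵥ v) :=
    (exp_series_hasSum_exp' N).map (mulVec.addMonoidHomLeft v)
      (continuous_id.matrix_mulVec continuous_const)
  refine hexp.unique (hasSum_sum_of_ne_finset_zero (s := range k) fun i hi => ?_) |>.trans ?_
  · have hki : k ≤ i := by simpa using hi
    rw [← pow_sub_mul_pow N hki, smul_mulVec, ← mulVec_mulVec, h, mulVec_zero, smul_zero]
  · refine sum_congr rfl fun i _ => ?_
    rw [smul_mulVec, ← Rat.cast_smul_eq_qsmul ℂ]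
    push_cast
    rfl

theorem exp_eq_exp_smul_exp_sub (M : Matrix ι ι ℂ) (μ : ℂ) :
    exp M = Complex.exp μ • exp (M - μ • 1) := by
  conv_lhs => rw [← add_sub_cancel (μ • (1 : Matrix ι ι ℂ)) M]
  rw [exp_add_of_commute _ _ ((Commute.one_left _).smul_left μ), smul_one_eq_diagonal, exp_diagonal, Pi.exp_def, ← Complex.exp_eq_exp_ℂ,
    ← smul_one_eq_diagonal, smul_one_mul]

theorem toLin'_sub_smul_one (M : Matrix ι ι ℂ) (μ : ℂ) :
    toLin' (M - μ • 1) = toLin' M - μ • 1 := by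
  rw [map_sub, map_smul, toLin'_one, End.one_eq_id]

theorem pow_card_sub_smul_one_mulVec_eq_zero {M : Matrix ι ι ℂ} {μ : ℂ} {v : ι → ℂ}
    (hv : v ∈ End.maxGenEigenspace (toLin' M) μ) : (M - μ • 1) ^ Fintype.card ι *ᵥ v = 0 := by
  rwa [End.maxGenEigenspace_eq_genEigenspace_finrank, End.mem_genEigenspace_nat,
    Module.finrank_fintype_fun_eq_card, ← toLin'_sub_smul_one, ← toLin'_pow, LinearMap.mem_ker,
    toLin'_apply] at hv

theorem coe_restrict_toLin'_pow_apply {M : Matrix ι ι ℂ} {W : Submodule ℂ (ι → ℂ)}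
    (hM : ∀ x ∈ W, toLin' M x ∈ W) (i : ℕ) (w : W) :
    ((((toLin' M).restrict hM) ^ i) w : ι → ℂ) = M ^ i *ᵥ (w : ι → ℂ) := by
  rw [End.pow_restrict, LinearMap.coe_restrict_apply, ← toLin'_pow, toLin'_apply]

theorem restrict_toLin'_sub_smul_one_pow_card {M : Matrix ι ι ℂ} {μ : ℂ} {W : Submodule ℂ (ι → ℂ)}
    (hW : W ≤ End.maxGenEigenspace (toLin' M) μ) (hN : ∀ x ∈ W, toLin' (M - μ • 1) x ∈ W) :
    (toLin' (M - μ • 1)).restrict hN ^ Fintype.card ι = 0 := by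
  ext w
  rw [coe_restrict_toLin'_pow_apply, pow_card_sub_smul_one_mulVec_eq_zero (hW w.2)]
  rfl

theorem restrict_toLin'_exp {M : Matrix ι ι ℂ} {μ : ℂ} {W : Submodule ℂ (ι → ℂ)}
    (hW : W ≤ End.maxGenEigenspace (toLin' M) μ) (hN : ∀ x ∈ W, toLin' (M - μ • 1) x ∈ W)
    (hE : ∀ x ∈ W, toLin' (exp M) x ∈ W) :
    (toLin' (exp M)).restrict hE =
      Complex.exp μ • IsNilpotent.exp ((toLin' (M - μ • 1)).restrict hN) := by
  refine LinearMap.ext fun w => Subtype.ext ?_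
  rw [IsNilpotent.exp_eq_sum (restrict_toLin'_sub_smul_one_pow_card hW hN)]
  simp only [LinearMap.coe_restrict_apply, toLin'_apply, LinearMap.smul_apply,
    LinearMap.sum_apply, Submodule.coe_smul, Submodule.coe_sum, Submodule.coe_smul_of_tower,
    coe_restrict_toLin'_pow_apply]
  rw [exp_eq_exp_smul_exp_sub M μ, smul_mulVec,
    exp_mulVec_of_pow_mulVec_eq_zero (pow_card_sub_smul_one_mulVec_eq_zero (hW w.2))]

theorem mapsTo_maxGenEigenspace_toLin' {M N : Matrix ι ι ℂ} (h : Commute M N) (μ : ℂ) :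
    ∀ x ∈ End.maxGenEigenspace (toLin' M) μ, toLin' N x ∈ End.maxGenEigenspace (toLin' M) μ :=
  End.mapsTo_maxGenEigenspace_of_comm (h.map toLinAlgEquiv') μ

theorem mapsTo_maxGenEigenspace_toLin'_sub_smul_one (M : Matrix ι ι ℂ) (μ : ℂ) :
    ∀ x ∈ End.maxGenEigenspace (toLin' M) μ,
      toLin' (M - μ • 1) x ∈ End.maxGenEigenspace (toLin' M) μ :=
  mapsTo_maxGenEigenspace_toLin' ((Commute.refl M).sub_right ((Commute.one_right M).smul_right μ)) μ

theorem mapsTo_maxGenEigenspace_toLin'_exp (M : Matrix ι ι ℂ) (μ : ℂ) :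
    ∀ x ∈ End.maxGenEigenspace (toLin' M) μ,
      toLin' (exp M) x ∈ End.maxGenEigenspace (toLin' M) μ :=
  mapsTo_maxGenEigenspace_toLin' (Commute.refl M).exp_right μ

theorem maxGenEigenspace_toLin'_le_exp (M : Matrix ι ι ℂ) (μ : ℂ) :
    End.maxGenEigenspace (toLin' M) μ ≤
      End.maxGenEigenspace (toLin' (exp M)) (Complex.exp μ) := by
  have hN := mapsTo_maxGenEigenspace_toLin'_sub_smul_one M μ
  have hE := mapsTo_maxGenEigenspace_toLin'_exp M μ
  obtain ⟨k, hk⟩ : IsNilpotent (IsNilpotent.exp ((toLin' (M - μ • 1)).restrict hN) - 1) :=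
    IsNilpotent.isNilpotent_exp_sub_one ⟨_, restrict_toLin'_sub_smul_one_pow_card le_rfl hN⟩
  intro v hv
  have hv' : (⟨v, hv⟩ : End.maxGenEigenspace (toLin' M) μ) ∈
      End.maxGenEigenspace ((toLin' (exp M)).restrict hE) (Complex.exp μ) := by
    refine (End.mem_maxGenEigenspace _ _ _).mpr ⟨k, ?_⟩
    rw [restrict_toLin'_exp le_rfl hN hE,
      ← smul_sub (Complex.exp μ) (IsNilpotent.exp ((toLin' (M - μ • 1)).restrict hN)) 1,
      smul_pow, hk, smul_zero]
    rfl
  exact (End.genEigenspace_restrict _ _ ⊤ _ hE).le hv'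

theorem maxGenEigenspace_toLin'_exp_le {M : Matrix ι ι ℂ}
    (hM : ∀ μ ∈ spectrum ℂ M, |μ.im| < Real.pi) {μ : ℂ} (hμ : |μ.im| < Real.pi) :
    End.maxGenEigenspace (toLin' (exp M)) (Complex.exp μ) ≤ End.maxGenEigenspace (toLin' M) μ :=
  End.maxGenEigenspace_le_of_forall_le_maxGenEigenspace_comp (maxGenEigenspace_toLin'_le_exp M)
    fun ν hν hexp => Complex.exp_injOn_abs_im_lt_pi
      (hM ν (spectrum_toLin' M ▸ hν.mem_spectrum)) hμ hexp

theorem maxGenEigenspace_toLin'_le_of_exp_eq {A B : Matrix ι ι ℂ}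
    (hA : ∀ μ ∈ spectrum ℂ A, |μ.im| < Real.pi) (hB : ∀ μ ∈ spectrum ℂ B, |μ.im| < Real.pi)
    (h : exp A = exp B) (μ : ℂ) :
    End.maxGenEigenspace (toLin' A) μ ≤ End.maxGenEigenspace (toLin' B) μ := by
  by_cases hbot : End.maxGenEigenspace (toLin' A) μ = ⊥
  · exact hbot ▸ bot_le
  have hμ : End.HasEigenvalue (toLin' A) μ :=
    (End.hasUnifEigenvalue_iff_hasUnifEigenvalue_one (by simp)).mp hbot
  refine (maxGenEigenspace_toLin'_le_exp A μ).trans ?_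
  rw [h]
  exact maxGenEigenspace_toLin'_exp_le hB (hA μ (spectrum_toLin' A ▸ hμ.mem_spectrum))

theorem mulVec_eq_of_exp_eq_of_maxGenEigenspace_eq {A B : Matrix ι ι ℂ} (h : exp A = exp B)
    {μ : ℂ} (hAB : End.maxGenEigenspace (toLin' A) μ = End.maxGenEigenspace (toLin' B) μ)
    {v : ι → ℂ} (hv : v ∈ End.maxGenEigenspace (toLin' A) μ) : A *ᵥ v = B *ᵥ v := by
  have hNA := mapsTo_maxGenEigenspace_toLin'_sub_smul_one A μ
  have hNB := hAB ▸ mapsTo_maxGenEigenspace_toLin'_sub_smul_one B μ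
  have hEA := mapsTo_maxGenEigenspace_toLin'_exp A μ
  have hEB : ∀ x ∈ End.maxGenEigenspace (toLin' A) μ,
      toLin' (exp B) x ∈ End.maxGenEigenspace (toLin' A) μ := h ▸ hEA
  have hexp : IsNilpotent.exp ((toLin' (A - μ • 1)).restrict hNA) =
      IsNilpotent.exp ((toLin' (B - μ • 1)).restrict hNB) := by
    refine (smul_right_inj (Complex.exp_ne_zero μ)).mp ?_
    rw [← restrict_toLin'_exp le_rfl hNA hEA, ← restrict_toLin'_exp hAB.le hNB hEB]
    simp only [h]
  have hnil := IsNilpotent.exp_injOn ⟨_, restrict_toLin'_sub_smul_one_pow_card le_rfl hNA⟩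
    ⟨_, restrict_toLin'_sub_smul_one_pow_card hAB.le hNB⟩ hexp
  simpa [sub_mulVec] using congrArg Subtype.val (LinearMap.congr_fun hnil ⟨v, hv⟩)

theorem eq_of_exp_eq_of_forall_abs_im_lt_pi {A B : Matrix ι ι ℂ}
    (hA : ∀ μ ∈ spectrum ℂ A, |μ.im| < Real.pi) (hB : ∀ μ ∈ spectrum ℂ B, |μ.im| < Real.pi)
    (h : exp A = exp B) : A = B := by
  refine toLin'.injective (LinearMap.ext fun v => ?_)
  have hv : v ∈ ⨆ μ, End.maxGenEigenspace (toLin' A) μ := by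
    rw [End.iSup_maxGenEigenspace_eq_top]
    trivial
  refine (iSup_le fun μ x hx => ?_ : _ ≤ LinearMap.eqLocus (toLin' A) (toLin' B)) hv
  rw [LinearMap.mem_eqLocus, toLin'_apply, toLin'_apply]
  exact mulVec_eq_of_exp_eq_of_maxGenEigenspace_eq h
    ((maxGenEigenspace_toLin'_le_of_exp_eq hA hB h μ).antisymm
      (maxGenEigenspace_toLin'_le_of_exp_eq hB hA h.symm μ)) hx

theorem exp_map_algebraMap (M : Matrix ι ι ℝ) :
    (exp M).map (algebraMap ℝ ℂ) = exp (M.map (algebraMap ℝ ℂ)) := by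
  open scoped Norms.Operator in
  exact map_exp (algebraMap ℝ ℂ).mapMatrix (continuous_id.matrix_map Complex.continuous_ofReal) M

end Matrix

theorem spectrum.abs_im_lt_of_mem_ofReal_smul {𝔸 : Type*} [Ring 𝔸] [Algebra ℂ 𝔸] {a : 𝔸}
    {t c : ℝ} (ht : 0 < t) (ha : ∀ μ ∈ spectrum ℂ a, |μ.im| < c / t) {μ : ℂ}
    (hμ : μ ∈ spectrum ℂ ((t : ℂ) • a)) : |μ.im| < c := by
  have ht' : (t : ℂ) ≠ 0 := Complex.ofReal_ne_zero.mpr ht.ne'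
  rw [← Units.val_mk0 ht', ← Units.smul_def, spectrum.unit_smul_eq_smul] at hμ
  obtain ⟨ν, hν, rfl⟩ := hμ
  dsimp only
  rw [Units.val_mk0, smul_eq_mul, Complex.im_ofReal_mul, abs_mul, abs_of_pos ht,
    ← lt_div_iff₀' ht]
  exact ha ν hν

/-- Uniqueness of the principal matrix logarithm: if `e^{hA} = e^{hB}` for some `h > 0`
and all eigenvalues `λ` of `A` and of `B` satisfy `|Im λ| < π / h`, then `A = B`. -/
theorem eq_of_exp_eq_of_spectrum_in_strip
    (N : ℕ) (A B : Matrix (Fin N) (Fin N) ℝ) (h : ℝ) (hh : 0 < h)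
    (hA : ∀ μ ∈ spectrum ℂ (A.map (algebraMap ℝ ℂ)), |μ.im| < Real.pi / h)
    (hB : ∀ μ ∈ spectrum ℂ (B.map (algebraMap ℝ ℂ)), |μ.im| < Real.pi / h)
    (hexp : NormedSpace.exp (h • A) = NormedSpace.exp (h • B)) :
    A = B := by
  have hscale : ∀ M : Matrix (Fin N) (Fin N) ℝ,
      (h • M).map (algebraMap ℝ ℂ) = (h : ℂ) • M.map (algebraMap ℝ ℂ) := fun M => by
    ext
    simp
  have hC : (h : ℂ) • A.map (algebraMap ℝ ℂ) = (h : ℂ) • B.map (algebraMap ℝ ℂ) :=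
    Matrix.eq_of_exp_eq_of_forall_abs_im_lt_pi
      (fun _ => spectrum.abs_im_lt_of_mem_ofReal_smul hh hA)
      (fun _ => spectrum.abs_im_lt_of_mem_ofReal_smul hh hB)
      (by rw [← hscale, ← hscale, ← Matrix.exp_map_algebraMap, ← Matrix.exp_map_algebraMap, hexp])
  exact Matrix.map_injective (algebraMap ℝ ℂ).injective
    (smul_right_injective _ (Complex.ofReal_ne_zero.mpr hh.ne') hC)
end

section
/- Let A ∈ M_N(ℝ), B ∈ M_{N,m}(ℝ), let Σ ∈ M_m(ℝ) be symmetric positive definite, and let t > 0. Then the image (column space) of the N×(mN) block matrix [B, AB, ..., A^{N−1}B] equals the image of the N×N matrix ∫₀^t e^{Au} B Σ Bᵀ e^{Aᵀu} du. -/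
/-!
Both images are orthogonal complements of kernels: the image of `C = [B, AB, …, A^{N-1}B]` is
`(ker Cᵀ)ᗮ`, and the Gramian `G` is symmetric, so its image is `(ker G)ᗮ`. It therefore suffices
to show `ker Cᵀ = ker G`. By Cayley–Hamilton, `x ∈ ker Cᵀ` iff `Bᵀ (Aᵀ)ᵏ x = 0` for every `k`.
Since `Σ` is positive definite, `xᵀ G x = ∫₀ᵗ ⟪w u, Σ w u⟫ du` with `w u = Bᵀ e^{uAᵀ} x`, so
`x ∈ ker G` iff `w` vanishes on `[0, t]`. Finally `w` vanishes on `[0, t]` iff all the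
coefficients `Bᵀ (Aᵀ)ᵏ x` of its exponential series vanish: one direction sums the series, the
other differentiates `k` times on the interval and evaluates at `0`.
-/

open Matrix MeasureTheory NormedSpace Set Filter

theorem eqOn_zero_of_hasDerivAt_of_eqOn_zero {E : Type*} [NormedAddCommGroup E]
    [NormedSpace ℝ E] {g g' : ℝ → E} {a b : ℝ} (hab : a < b)
    (hg : ∀ u, HasDerivAt g (g' u) u) (hg' : Continuous g') (h : EqOn g 0 (Icc a b)) :
    EqOn g' 0 (Icc a b) := by
  have hIoo : EqOn g' 0 (Ioo a b) := fun u hu =>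
    (hg u).unique ((hasDerivAt_const u 0).congr_of_eventuallyEq
      (eventually_of_mem (Icc_mem_nhds hu.1 hu.2) h))
  simpa [closure_Ioo hab.ne] using hIoo.closure hg' continuous_const

theorem eqOn_zero_of_intervalIntegral_eq_zero {f : ℝ → ℝ} {a b : ℝ} (hab : a < b)
    (hf : Continuous f) (hf₀ : 0 ≤ f) (h : ∫ u in a..b, f u = 0) : EqOn f 0 (Icc a b) := by
  have hae := (intervalIntegral.integral_eq_zero_iff_of_le_of_nonneg_ae hab.le
    (ae_of_all _ hf₀) (hf.intervalIntegrable a b)).1 h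
  rw [Measure.restrict_congr_set Ioc_ae_eq_Icc] at hae
  exact Measure.eqOn_Icc_of_ae_eq volume hab.ne hae hf.continuousOn continuousOn_const

namespace Matrix

theorem range_toEuclideanLin_eq_orthogonal_ker {𝕜 n k : Type*} [RCLike 𝕜] [Fintype n]
    [DecidableEq n] [Fintype k] [DecidableEq k] (C : Matrix n k 𝕜) :
    LinearMap.range (toEuclideanLin C) = (LinearMap.ker (toEuclideanLin Cᴴ))ᗮ := by
  rw [LinearMap.orthogonal_ker, ← toEuclideanLin_conjTranspose_eq_adjoint,
    conjTranspose_conjTranspose]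

theorem range_mulVecLin_eq_of_ker_conjTranspose_eq {𝕜 n k l : Type*} [RCLike 𝕜] [Fintype n]
    [Fintype k] [Fintype l] (C : Matrix n k 𝕜) (G : Matrix n l 𝕜)
    (h : LinearMap.ker Cᴴ.mulVecLin = LinearMap.ker Gᴴ.mulVecLin) :
    LinearMap.range C.mulVecLin = LinearMap.range G.mulVecLin := by
  classical
  have hEuclidean : LinearMap.range (toEuclideanLin C) = LinearMap.range (toEuclideanLin G) := by
    rw [range_toEuclideanLin_eq_orthogonal_ker, range_toEuclideanLin_eq_orthogonal_ker]
    congr 1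
    ext x
    simpa [toLpLin_apply] using SetLike.ext_iff.mp h (WithLp.ofLp x)
  ext y
  simpa [toLpLin_apply, (WithLp.linearEquiv 2 𝕜 _).symm.surjective.exists] using
    SetLike.ext_iff.mp hEuclidean (WithLp.toLp 2 y)

theorem transpose_of_blocks_mulVec_eq_zero_iff {R n m ι : Type*} [NonUnitalNonAssocSemiring R]
    [Fintype n] (P : ι → Matrix n m R) (x : n → R) :
    (of fun i (p : ι × m) => P p.1 i p.2)ᵀ *ᵥ x = 0 ↔ ∀ k, (P k)ᵀ *ᵥ x = 0 := by
  simp only [funext_iff, Prod.forall]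
  rfl

section CayleyHamilton

variable {R n m : Type*} [CommRing R] [Fintype n] [DecidableEq n]

open Polynomial in
theorem pow_mulVec_mem_span_pow_mulVec (M : Matrix n n R) (x : n → R) (k : ℕ) :
    M ^ k *ᵥ x ∈ Submodule.span R ((fun i => M ^ i *ᵥ x) '' Iio (Fintype.card n)) := by
  nontriviality R
  rcases isEmpty_or_nonempty n with _ | _
  · simp [Subsingleton.elim x 0]
  have hdeg : (X ^ k %ₘ M.charpoly).natDegree < Fintype.card n := by
    rw [← M.charpoly_natDegree_eq_dim]
    refine natDegree_modByMonic_lt _ M.charpoly_monic fun h => ?_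
    have := M.charpoly_natDegree_eq_dim
    rw [h, natDegree_one] at this
    exact Fintype.card_ne_zero this.symm
  rw [pow_eq_aeval_mod_charpoly, aeval_eq_sum_range' hdeg, sum_mulVec]
  refine Submodule.sum_mem _ fun i hi => ?_
  rw [smul_mulVec]
  exact Submodule.smul_mem _ _ (Submodule.subset_span ⟨i, Finset.mem_range.mp hi, rfl⟩)

theorem forall_lt_card_mul_pow_mulVec_eq_zero_iff (D : Matrix m n R) (M : Matrix n n R)
    (x : n → R) :
    (∀ k < Fintype.card n, (D * M ^ k) *ᵥ x = 0) ↔ ∀ k, (D * M ^ k) *ᵥ x = 0 := by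
  refine ⟨fun h k => ?_, fun h k _ => h k⟩
  have hspan : Submodule.span R ((fun i => M ^ i *ᵥ x) '' Iio (Fintype.card n)) ≤
      LinearMap.ker D.mulVecLin := by
    rw [Submodule.span_le]
    rintro _ ⟨i, hi, rfl⟩
    simpa [mulVec_mulVec] using h i hi
  simpa [mulVec_mulVec] using hspan (pow_mulVec_mem_span_pow_mulVec M x k)

end CayleyHamilton

section Exponential

/- `exp` on matrices depends only on the topology, so the proofs may equip `Matrix n n ℝ` with
any submultiplicative norm, here the `L∞` operator norm. -/

variable {n m : Type*} [Fintype n] [DecidableEq n]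

theorem continuous_exp_smul (M : Matrix n n ℝ) : Continuous fun u : ℝ => exp (u • M) := by
  let _ : NormedRing (Matrix n n ℝ) := Matrix.linftyOpNormedRing
  let _ : NormedAlgebra ℝ (Matrix n n ℝ) := Matrix.linftyOpNormedAlgebra
  exact continuous_iff_continuousAt.2 fun u => (hasDerivAt_exp_smul_const M u).continuousAt

theorem hasDerivAt_mul_exp_smul_mulVec [Fintype m] (D : Matrix m n ℝ) (M : Matrix n n ℝ)
    (x : n → ℝ) (u : ℝ) :
    HasDerivAt (fun u => (D * exp (u • M)) *ᵥ x) ((D * M * exp (u • M)) *ᵥ x) u := by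
  let _ : NormedRing (Matrix n n ℝ) := Matrix.linftyOpNormedRing
  let _ : NormedAlgebra ℝ (Matrix n n ℝ) := Matrix.linftyOpNormedAlgebra
  let L := ((mulVecBilin ℝ ℝ).flip x ∘ₗ mulLeftLinearMap n ℝ D).toContinuousLinearMap
  have h := L.hasFDerivAt.comp_hasDerivAt u (hasDerivAt_exp_smul_const' M u)
  exact h.congr_deriv (by rw [Matrix.mul_assoc]; rfl)

theorem mul_exp_smul_mulVec_eq_zero [Fintype m] {D : Matrix m n ℝ} {M : Matrix n n ℝ}
    {x : n → ℝ} (h : ∀ k : ℕ, (D * M ^ k) *ᵥ x = 0) (u : ℝ) : (D * exp (u • M)) *ᵥ x = 0 := by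
  let _ : NormedRing (Matrix n n ℝ) := Matrix.linftyOpNormedRing
  let _ : NormedAlgebra ℝ (Matrix n n ℝ) := Matrix.linftyOpNormedAlgebra
  let L := ((mulVecBilin ℝ ℝ).flip x ∘ₗ mulLeftLinearMap n ℝ D).toContinuousLinearMap
  have hterm (k : ℕ) : L ((k.factorial⁻¹ : ℝ) • (u • M) ^ k) = 0 := by simp [L, smul_pow, h]
  have hsum := L.hasSum (exp_series_hasSum_exp' (𝕂 := ℝ) (u • M))
  simp only [hterm] at hsum
  exact hsum.unique hasSum_zero

theorem forall_mul_pow_mulVec_eq_zero_iff_forall_Icc [Fintype m] {D : Matrix m n ℝ}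
    {M : Matrix n n ℝ} {x : n → ℝ} {t : ℝ} (ht : 0 < t) :
    (∀ k : ℕ, (D * M ^ k) *ᵥ x = 0) ↔ ∀ u ∈ Icc 0 t, (D * exp (u • M)) *ᵥ x = 0 := by
  refine ⟨fun h u _ => mul_exp_smul_mulVec_eq_zero h u, fun h k => ?_⟩
  have hcont (D' : Matrix m n ℝ) : Continuous fun u => (D' * exp (u • M)) *ᵥ x :=
    (continuous_const.matrix_mul (continuous_exp_smul M)).matrix_mulVec continuous_const
  have hderiv (k : ℕ) : EqOn (fun u => (D * M ^ k * exp (u • M)) *ᵥ x) 0 (Icc 0 t) := by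
    induction k with
    | zero => exact fun u hu => by simpa using h u hu
    | succ k ih =>
      rw [pow_succ, ← Matrix.mul_assoc]
      exact eqOn_zero_of_hasDerivAt_of_eqOn_zero ht (hasDerivAt_mul_exp_smul_mulVec _ M x)
        (hcont _) ih
  simpa using hderiv k (left_mem_Icc.2 ht.le)

end Exponential

section Gramian

variable {n m l : Type*} [Fintype l]

theorem of_intervalIntegral_mulVec {F : ℝ → Matrix n l ℝ} (hF : Continuous F) (a b : ℝ)
    (x : l → ℝ) :
    (of fun i j => ∫ u in a..b, F u i j) *ᵥ x = fun i => ∫ u in a..b, (F u *ᵥ x) i := by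
  ext i
  simp only [mulVec, dotProduct, of_apply, ← intervalIntegral.integral_mul_const]
  exact (intervalIntegral.integral_finsetSum fun j _ =>
    (by fun_prop : Continuous fun u => F u i j * x j).intervalIntegrable a b).symm

theorem dotProduct_of_intervalIntegral_mulVec [Fintype n] {F : ℝ → Matrix n l ℝ}
    (hF : Continuous F) (a b : ℝ) (x : l → ℝ) (y : n → ℝ) :
    y ⬝ᵥ ((of fun i j => ∫ u in a..b, F u i j) *ᵥ x) = ∫ u in a..b, y ⬝ᵥ (F u *ᵥ x) := by
  simp only [of_intervalIntegral_mulVec hF, dotProduct, ← intervalIntegral.integral_const_mul]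
  exact (intervalIntegral.integral_finsetSum fun i _ =>
    (by fun_prop : Continuous fun u => y i * (F u *ᵥ x) i).intervalIntegrable a b).symm

theorem isSymm_gramian [Fintype m] {Φ : ℝ → Matrix n m ℝ} {S : Matrix m m ℝ} (hS : S.IsSymm)
    (a b : ℝ) :
    (of fun i j => ∫ u in a..b, (Φ u * S * (Φ u)ᵀ) i j).IsSymm := by
  refine IsSymm.ext fun i j => intervalIntegral.integral_congr fun u _ => ?_
  rw [← transpose_apply (Φ u * S * _), transpose_mul, transpose_mul, transpose_transpose, hS.eq,
    Matrix.mul_assoc]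

theorem gramian_mulVec_eq_zero_iff [Fintype n] [Fintype m] {Φ : ℝ → Matrix n m ℝ}
    (hΦ : Continuous Φ) {S : Matrix m m ℝ} (hS : S.PosDef) {a b : ℝ} (hab : a < b)
    (x : n → ℝ) :
    (of fun i j => ∫ u in a..b, (Φ u * S * (Φ u)ᵀ) i j) *ᵥ x = 0 ↔
      ∀ u ∈ Icc a b, (Φ u)ᵀ *ᵥ x = 0 := by
  have hF : Continuous fun u => Φ u * S * (Φ u)ᵀ := by fun_prop
  constructor
  · intro h
    have hquad (u : ℝ) :
        x ⬝ᵥ ((Φ u * S * (Φ u)ᵀ) *ᵥ x) = (Φ u)ᵀ *ᵥ x ⬝ᵥ (S *ᵥ ((Φ u)ᵀ *ᵥ x)) := by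
      rw [← mulVec_mulVec, ← mulVec_mulVec, dotProduct_mulVec, ← mulVec_transpose]
    have hint : ∫ u in a..b, (Φ u)ᵀ *ᵥ x ⬝ᵥ (S *ᵥ ((Φ u)ᵀ *ᵥ x)) = 0 := by
      simp_rw [← hquad, ← dotProduct_of_intervalIntegral_mulVec hF, h, dotProduct_zero]
    have hzero := eqOn_zero_of_intervalIntegral_eq_zero
      (f := fun u => (Φ u)ᵀ *ᵥ x ⬝ᵥ (S *ᵥ ((Φ u)ᵀ *ᵥ x))) hab (by fun_prop)
      (fun u => by simpa using hS.posSemidef.dotProduct_mulVec_nonneg ((Φ u)ᵀ *ᵥ x)) hint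
    intro u hu
    by_contra hne
    simpa using (hS.dotProduct_mulVec_pos hne).ne' (hzero hu)
  · intro h
    rw [of_intervalIntegral_mulVec hF]
    ext i
    rw [intervalIntegral.integral_congr (g := 0) fun u hu => ?_]
    · simp
    · simp [← mulVec_mulVec, h u (uIcc_of_le hab.le ▸ hu)]

end Gramian

end Matrix

/-- The image of the controllability matrix `[B, AB, …, A^{N-1}B]` equals the image of the
finite-horizon controllability Gramian `∫₀^t e^{Au} B Σ Bᵀ e^{Aᵀu} du`, for any symmetric
positive definite `Σ` and any `t > 0`. -/
theorem image_controllability_eq_image_gramian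
    (N m : ℕ) (A : Matrix (Fin N) (Fin N) ℝ) (B : Matrix (Fin N) (Fin m) ℝ)
    (Sig : Matrix (Fin m) (Fin m) ℝ) (hSig : Sig.PosDef)
    (t : ℝ) (ht : 0 < t) :
    LinearMap.range (Matrix.mulVecLin
        (Matrix.of fun (i : Fin N) (p : Fin N × Fin m) => (A ^ (p.1 : ℕ) * B) i p.2)) =
    LinearMap.range (Matrix.mulVecLin
        (Matrix.of fun i j =>
          ∫ u in (0:ℝ)..t,
            (NormedSpace.exp (u • A) * B * Sig * Bᵀ * NormedSpace.exp (u • Aᵀ)) i j)) := by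
  set Φ : ℝ → Matrix (Fin N) (Fin m) ℝ := fun u => exp (u • A) * B
  have hΦT (u : ℝ) : (Φ u)ᵀ = Bᵀ * exp (u • Aᵀ) := by
    simp [Φ, transpose_mul, ← exp_transpose]
  have hintegrand (u : ℝ) :
      exp (u • A) * B * Sig * Bᵀ * exp (u • Aᵀ) = Φ u * Sig * (Φ u)ᵀ := by
    simp [hΦT, Φ, Matrix.mul_assoc]
  have hΦ : Continuous Φ := (continuous_exp_smul A).matrix_mul continuous_const
  have hSigSymm : Sig.IsSymm := isHermitian_iff_isSymm.1 hSig.isHermitian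
  simp_rw [hintegrand]
  apply range_mulVecLin_eq_of_ker_conjTranspose_eq
  ext x
  simp only [conjTranspose_eq_transpose_of_trivial, LinearMap.mem_ker, mulVecLin_apply]
  rw [(isSymm_gramian (Φ := Φ) hSigSymm 0 t).eq, gramian_mulVec_eq_zero_iff hΦ hSig ht x]
  refine (transpose_of_blocks_mulVec_eq_zero_iff (fun k : Fin N => A ^ (k : ℕ) * B) x).trans ?_
  simp_rw [hΦT, transpose_mul, transpose_pow]
  rw [← forall_mul_pow_mulVec_eq_zero_iff_forall_Icc ht,
    ← forall_lt_card_mul_pow_mulVec_eq_zero_iff, Fintype.card_fin]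
  exact Fin.forall_iff
end

section
/- Let A be an N×N real matrix whose eigenvalues all have strictly negative real parts, and assume the Lyapunov equation AΓ₀ + Γ₀Aᵀ = −BΣBᵀ holds with Γ₀ = ∫₀^∞ e^{Au}BΣBᵀe^{Aᵀu}du. Then for every real ω, the identity (1/2π) C(iωI − A)^{−1} B Σ Bᵀ (−iωI − Aᵀ)^{−1} Cᵀ = (1/2π) ∫_{−∞}^{∞} e^{−iωh} γ(h) dh holds, where γ(h) = C e^{Ah} Γ₀ Cᵀ for h ≥ 0 and γ(h) = C Γ₀ e^{−Aᵀh} Cᵀ for h < 0. -/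
/-!
Stability of `A` makes `e^{tA} v` decay exponentially for every generalized eigenvector `v`, hence
`‖e^{tA}‖ = O(e^{-εt})`, so `t ↦ e^{-iωt} e^{tA} = e^{t(A - iω)}` is integrable on `(0, ∞)` with
integral `(iω - A)⁻¹` by the fundamental theorem of calculus; the same holds for `Aᵀ` at `-ω`.
Splitting the Fourier integral of `γ` at `0` therefore gives
`C ((iω - A)⁻¹ Γ₀ + Γ₀ (-iω - Aᵀ)⁻¹) Cᵀ`. The Lyapunov equation, rewritten as
`(iω - A) Γ₀ + Γ₀ (-iω - Aᵀ) = B Σ Bᵀ`, turns this into `C (iω - A)⁻¹ B Σ Bᵀ (-iω - Aᵀ)⁻¹ Cᵀ`.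
-/

open Matrix MeasureTheory NormedSpace Filter Topology Asymptotics Set
open scoped Nat

attribute [local instance] Matrix.linftyOpNormedAddCommGroup Matrix.linftyOpNormedRing
  Matrix.linftyOpNormedAlgebra

theorem integral_Ioi_exp_smul {𝔸 : Type*} [NormedRing 𝔸] [NormedAlgebra ℝ 𝔸] [CompleteSpace 𝔸]
    {a : 𝔸} (ha : IsUnit a) (hint : IntegrableOn (fun t : ℝ => exp (t • a)) (Ioi 0)) :
    ∫ t in Ioi (0 : ℝ), exp (t • a) = -Ring.inverse a := by
  have hderiv (t : ℝ) : HasDerivAt (fun u : ℝ => exp (u • a)) (a * exp (t • a)) t :=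
    hasDerivAt_exp_smul_const' a t
  have hdecay : Tendsto (fun t : ℝ => exp (t • a)) atTop (𝓝 0) :=
    tendsto_zero_of_hasDerivAt_of_integrableOn_Ioi (fun t _ => hderiv t) (hint.const_mul a) hint
  have hprimitive (t : ℝ) :
      HasDerivAt (fun u : ℝ => Ring.inverse a * exp (u • a)) (exp (t • a)) t := by
    simpa only [← mul_assoc, Ring.inverse_mul_cancel a ha, one_mul] using
      (hderiv t).const_mul (Ring.inverse a)
  rw [integral_Ioi_of_hasDerivAt_of_tendsto' (fun t _ => hprimitive t) hint
    (by simpa using hdecay.const_mul (Ring.inverse a))]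
  simp

theorem integral_eq_integral_Ioi_add_integral_Ioi_comp_neg {E : Type*} [NormedAddCommGroup E]
    [NormedSpace ℝ E] {f : ℝ → E} (hpos : IntegrableOn f (Ioi 0))
    (hneg : IntegrableOn (fun t => f (-t)) (Ioi 0)) :
    ∫ t, f t = (∫ t in Ioi 0, f t) + ∫ t in Ioi 0, f (-t) := by
  have hIio : IntegrableOn f (Iio 0) := by
    rw [← (Measure.measurePreserving_neg (volume : Measure ℝ)).integrableOn_comp_preimage
      (Homeomorph.neg ℝ).measurableEmbedding]
    simpa [Function.comp_def] using hneg
  rw [← intervalIntegral.integral_Iio_add_Ici hIio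
      ((integrableOn_Ici_iff_integrableOn_Ioi (by simp)).mpr hpos),
    integral_Ici_eq_integral_Ioi, integral_comp_neg_Ioi, neg_zero, integral_Iic_eq_integral_Iio,
    add_comm]

theorem isBigO_pow_mul_cexp_mul_atTop {μ : ℂ} {ε : ℝ} (hμ : μ.re < -ε) (j : ℕ) :
    (fun t : ℝ => (t : ℂ) ^ j * Complex.exp (t * μ)) =O[atTop] fun t => Real.exp (-ε * t) := by
  have hδ : 0 < -ε - μ.re := by linarith
  have h := (isLittleO_pow_exp_pos_mul_atTop j hδ).isBigO.mul
    (isBigO_refl (fun t => Real.exp (μ.re * t)) atTop)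
  refine isBigO_norm_left.mp (h.congr' ?_ (Eventually.of_forall fun t => ?_))
  · filter_upwards [eventually_ge_atTop 0] with t ht
    simp [Complex.norm_exp, abs_of_nonneg ht, mul_comm]
  · simp only [← Real.exp_add]; ring_nf

/- The `L∞` operator norm induces the product topology of `Matrix` only up to a defeq that
instance search does not unfold, so the extended norm needed by `IntegrableOn` is given by hand. -/
noncomputable instance {n : Type*} [Fintype n] : ContinuousENorm (Matrix n n ℂ) :=
  SeminormedAddGroup.toContinuousENorm

namespace Matrix

variable {n : Type*} [Fintype n] [DecidableEq n]

theorem exp_mulVec_eq_sum_of_pow_mulVec_eq_zero {N : Matrix n n ℂ} {v : n → ℂ} {k : ℕ}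
    (hk : N ^ k *ᵥ v = 0) : exp N *ᵥ v = ∑ j ∈ Finset.range k, (j ! : ℂ)⁻¹ • (N ^ j *ᵥ v) := by
  have hsum := (exp_series_hasSum_exp' (𝕂 := ℂ) N).map ((mulVecBilin ℂ ℂ).flip v)
    (continuous_id.matrix_mulVec continuous_const)
  simp only [Function.comp_def, LinearMap.flip_apply, mulVecBilin_apply, smul_mulVec] at hsum
  refine hsum.unique (hasSum_sum_of_ne_finset_zero fun j hj => ?_)
  obtain ⟨i, rfl⟩ := Nat.exists_eq_add_of_le (not_lt.mp (Finset.mem_range.not.mp hj))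
  rw [add_comm, pow_add, ← mulVec_mulVec, hk, mulVec_zero, smul_zero]

theorem exp_eq_exp_smul_exp_sub_smul_one (M : Matrix n n ℂ) (μ : ℂ) :
    exp M = Complex.exp μ • exp (M - μ • 1) := by
  have hcomm : Commute (μ • (1 : Matrix n n ℂ)) (M - μ • 1) := (Commute.one_left _).smul_left μ
  have hscalar : exp (algebraMap ℂ (Matrix n n ℂ) μ) = algebraMap ℂ _ (exp μ) :=
    (map_exp _ (continuous_algebraMap ℂ (Matrix n n ℂ)) μ).symm
  conv_lhs => rw [← add_sub_cancel (μ • (1 : Matrix n n ℂ)) M]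
  rw [exp_add_of_commute _ _ hcomm, ← Algebra.algebraMap_eq_smul_one, hscalar,
    Algebra.algebraMap_eq_smul_one, smul_one_mul, Complex.exp_eq_exp_ℂ]

theorem isBigO_exp_smul_mulVec_of_mem_maxGenEigenspace {M : Matrix n n ℂ} {ε : ℝ}
    (hM : ∀ μ ∈ spectrum ℂ M, μ.re < -ε) {μ : ℂ} {v : n → ℂ}
    (hv : v ∈ Module.End.maxGenEigenspace (toLin' M) μ) :
    (fun t : ℝ => exp (t • M) *ᵥ v) =O[atTop] fun t => Real.exp (-ε * t) := by
  obtain ⟨k, hk⟩ := (Module.End.mem_maxGenEigenspace _ _ _).mp hv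
  rw [Module.End.one_eq_id, ← toLin'_one, ← map_smul, ← map_sub, ← toLin'_pow,
    toLin'_apply] at hk
  rcases eq_or_ne v 0 with rfl | hv0
  · simp only [mulVec_zero]; exact isBigO_zero _ _
  have hμ : μ ∈ spectrum ℂ M := by
    by_contra hμ
    rw [spectrum.notMem_iff, Algebra.algebraMap_eq_smul_one, ← neg_sub, IsUnit.neg_iff] at hμ
    exact hv0 (mulVec_injective_iff_isUnit.mpr (hμ.pow k) (hk.trans (mulVec_zero _).symm))
  have hexp : (fun t : ℝ => exp (t • M) *ᵥ v) = fun t : ℝ => ∑ j ∈ Finset.range k,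
      ((t : ℂ) ^ j * Complex.exp (t * μ)) • ((j ! : ℂ)⁻¹ • ((M - μ • 1) ^ j *ᵥ v)) := by
    funext t
    have hshift : t • M - ((t : ℂ) * μ) • 1 = (t : ℂ) • (M - μ • 1) := by
      rw [smul_sub, smul_smul, Complex.coe_smul]
    have hk' : ((t : ℂ) • (M - μ • 1)) ^ k *ᵥ v = 0 := by rw [smul_pow, smul_mulVec, hk, smul_zero]
    rw [exp_eq_exp_smul_exp_sub_smul_one _ ((t : ℂ) * μ), smul_mulVec, hshift,
      exp_mulVec_eq_sum_of_pow_mulVec_eq_zero hk', Finset.smul_sum]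
    refine Finset.sum_congr rfl fun j _ => ?_
    rw [smul_pow, smul_mulVec, smul_comm _ ((t : ℂ) ^ j), smul_smul, mul_comm]
  rw [hexp]
  refine IsBigO.fun_sum fun j _ => ?_
  simpa only [smul_eq_mul, mul_one] using (isBigO_pow_mul_cexp_mul_atTop (hM μ hμ) j).smul
    (isBigO_const_const ((j ! : ℂ)⁻¹ • ((M - μ • 1) ^ j *ᵥ v)) (one_ne_zero (α := ℝ)) atTop)

theorem isBigO_of_forall_isBigO_apply {α 𝕜 : Type*} [NormedField 𝕜] {l : Filter α}
    {f : α → Matrix n n 𝕜} {g : α → ℝ} (h : ∀ i j, (fun x => f x i j) =O[l] g) : f =O[l] g := by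
  have hf : f = fun x => ∑ i, ∑ j, f x i j • single i j (1 : 𝕜) := by
    funext x
    conv_lhs => rw [matrix_eq_sum_single (f x)]
    simp only [smul_single, smul_eq_mul, mul_one]
  rw [hf]
  refine IsBigO.fun_sum fun i _ => IsBigO.fun_sum fun j _ => ?_
  simpa only [smul_eq_mul, mul_one] using
    (h i j).smul (isBigO_const_const (single i j (1 : 𝕜)) (one_ne_zero (α := ℝ)) l)

theorem isBigO_exp_smul_of_forall_re_lt {M : Matrix n n ℂ} {ε : ℝ}
    (hM : ∀ μ ∈ spectrum ℂ M, μ.re < -ε) :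
    (fun t : ℝ => exp (t • M)) =O[atTop] fun t => Real.exp (-ε * t) := by
  let decaying : Submodule ℂ (n → ℂ) :=
    { carrier := {v | (fun t : ℝ => exp (t • M) *ᵥ v) =O[atTop] fun t => Real.exp (-ε * t)}
      add_mem' := fun {v w} hv hw => by simpa only [Set.mem_ofPred_eq, mulVec_add] using hv.add hw
      zero_mem' := by simpa only [Set.mem_ofPred_eq, mulVec_zero] using isBigO_zero _ _
      smul_mem' := fun c v hv => by
        simp only [Set.mem_ofPred_eq, mulVec_smul]; exact hv.const_smul_left c }
  have hall : ⊤ ≤ decaying := by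
    rw [← Module.End.iSup_maxGenEigenspace_eq_top (toLin' M)]
    exact iSup_le fun μ v hv => isBigO_exp_smul_mulVec_of_mem_maxGenEigenspace hM hv
  refine isBigO_of_forall_isBigO_apply fun i j => ?_
  simpa [mulVec_single] using isBigO_pi.mp (hall (Submodule.mem_top (x := Pi.single j 1))) i

theorem exists_pos_forall_re_lt_neg {M : Matrix n n ℂ} (hM : ∀ μ ∈ spectrum ℂ M, μ.re < 0) :
    ∃ ε > 0, ∀ μ ∈ spectrum ℂ M, μ.re < -ε := by
  have h : ∀ᶠ ε in 𝓝 (0 : ℝ), ∀ μ ∈ spectrum ℂ M, μ.re < -ε :=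
    (eventually_all_finite (finite_spectrum M)).mpr fun μ hμ =>
      (continuous_neg.tendsto' 0 0 neg_zero).eventually (eventually_gt_nhds (hM μ hμ))
  obtain ⟨ε, hε, hεpos⟩ := ((eventually_nhdsWithin_of_eventually_nhds h).and
    (self_mem_nhdsWithin : Ioi (0 : ℝ) ∈ 𝓝[>] 0)).exists
  exact ⟨ε, hεpos, hε⟩

theorem integrableOn_exp_smul_Ioi {M : Matrix n n ℂ} (hM : ∀ μ ∈ spectrum ℂ M, μ.re < 0) :
    IntegrableOn (fun t : ℝ => exp (t • M)) (Ioi 0) := by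
  obtain ⟨ε, hε, hMε⟩ := exists_pos_forall_re_lt_neg hM
  have hcont : Continuous fun t : ℝ => exp (t • M) :=
    exp_continuous.comp (continuous_id.smul continuous_const)
  exact ((hcont.continuousOn.locallyIntegrableOn measurableSet_Ici).integrableOn_of_isBigO_atTop
    (isBigO_exp_smul_of_forall_re_lt hMε) ⟨Ioi 0, Ioi_mem_atTop 0, exp_neg_integrableOn_Ioi 0 hε⟩
    ).mono_set Ioi_subset_Ici_self

theorem forall_re_lt_zero_sub_smul_one {M : Matrix n n ℂ} (hM : ∀ μ ∈ spectrum ℂ M, μ.re < 0)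
    {c : ℂ} (hc : c.re = 0) : ∀ μ ∈ spectrum ℂ (M - c • 1), μ.re < 0 := by
  intro μ hμ
  rw [← Algebra.algebraMap_eq_smul_one, ← spectrum.sub_singleton_eq] at hμ
  obtain ⟨ν, hν, _, rfl, rfl⟩ := hμ
  simpa [hc] using hM ν hν

theorem isUnit_smul_one_sub_of_re_eq_zero {M : Matrix n n ℂ}
    (hM : ∀ μ ∈ spectrum ℂ M, μ.re < 0) {c : ℂ} (hc : c.re = 0) : IsUnit (c • 1 - M) := by
  rw [← Algebra.algebraMap_eq_smul_one]
  exact spectrum.notMem_iff.mp fun hcM => (hM c hcM).ne hc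

theorem integral_Ioi_cexp_smul_exp_smul {M : Matrix n n ℂ} (hM : ∀ μ ∈ spectrum ℂ M, μ.re < 0)
    (ω : ℝ) :
    IntegrableOn (fun t : ℝ => Complex.exp (-(Complex.I * ω * t)) • exp (t • M)) (Ioi 0) ∧
      ∫ t in Ioi (0 : ℝ), Complex.exp (-(Complex.I * ω * t)) • exp (t • M) =
        ((Complex.I * ω) • 1 - M)⁻¹ := by
  have hN := forall_re_lt_zero_sub_smul_one hM (c := Complex.I * ω) (by simp)
  have hshift : (fun t : ℝ => Complex.exp (-(Complex.I * ω * t)) • exp (t • M)) =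
      fun t : ℝ => exp (t • (M - (Complex.I * ω) • 1)) := by
    funext t
    conv_rhs => rw [exp_eq_exp_smul_exp_sub_smul_one _ (-(Complex.I * ω * t))]
    congr 2
    ext i j
    simp only [Matrix.sub_apply, Matrix.smul_apply, Complex.real_smul, smul_eq_mul]
    ring
  have hunit : IsUnit (M - (Complex.I * ω) • 1) :=
    spectrum.isUnit_of_zero_notMem (R := ℂ) fun h0 => (hN 0 h0).false
  have hint := integrableOn_exp_smul_Ioi hN
  refine ⟨hshift ▸ hint, ?_⟩
  rw [hshift]
  refine (integral_Ioi_exp_smul hunit hint).trans ?_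
  rw [← nonsing_inv_eq_ringInverse, ← neg_sub M]
  refine (inv_eq_left_inv ?_).symm
  rw [neg_mul_neg, nonsing_inv_mul _ ((isUnit_iff_isUnit_det _).mp hunit)]

theorem integral_Ioi_cexp_mul_mul_exp_smul_mul_apply {p q : Type*} {M : Matrix n n ℂ}
    (hM : ∀ μ ∈ spectrum ℂ M, μ.re < 0) (ω : ℝ) (X : Matrix p n ℂ) (Y : Matrix n q ℂ)
    (i : p) (j : q) :
    IntegrableOn (fun t : ℝ => Complex.exp (-(Complex.I * ω * t)) * (X * exp (t • M) * Y) i j)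
        (Ioi 0) ∧
      ∫ t in Ioi (0 : ℝ), Complex.exp (-(Complex.I * ω * t)) * (X * exp (t • M) * Y) i j =
        (X * ((Complex.I * ω) • 1 - M)⁻¹ * Y) i j := by
  obtain ⟨hint, hval⟩ := integral_Ioi_cexp_smul_exp_smul hM ω
  let entry : Matrix n n ℂ →L[ℂ] ℂ := LinearMap.toContinuousLinearMap
    { toFun := fun P => (X * P * Y) i j
      map_add' := fun P Q => by simp [Matrix.mul_add, Matrix.add_mul]
      map_smul' := fun c P => by simp }
  have hentry (t : ℝ) : entry (Complex.exp (-(Complex.I * ω * t)) • exp (t • M)) =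
      Complex.exp (-(Complex.I * ω * t)) * (X * exp (t • M) * Y) i j := by
    simp [entry]
  simp only [← hentry]
  exact ⟨entry.integrable_comp hint, (entry.integral_comp_comm hint).trans (congrArg entry hval)⟩

theorem integral_cexp_mul_apply_eq_inv_add_inv {p q : Type*} {M M' : Matrix n n ℂ}
    (hM : ∀ μ ∈ spectrum ℂ M, μ.re < 0) (hM' : ∀ μ ∈ spectrum ℂ M', μ.re < 0) (ω : ℝ)
    (X : Matrix p n ℂ) (Γ : Matrix n n ℂ) (Y : Matrix n q ℂ) {G : ℝ → Matrix p q ℂ}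
    (hG_pos : ∀ t > 0, G t = X * exp (t • M) * Γ * Y)
    (hG_neg : ∀ t > 0, G (-t) = X * Γ * exp (t • M') * Y) (i : p) (j : q) :
    ∫ t : ℝ, Complex.exp (-(Complex.I * ω * t)) * G t i j =
      (X * ((Complex.I * ω) • 1 - M)⁻¹ * Γ * Y +
        X * Γ * ((-(Complex.I * ω)) • 1 - M')⁻¹ * Y) i j := by
  obtain ⟨hint_pos, hval_pos⟩ := integral_Ioi_cexp_mul_mul_exp_smul_mul_apply hM ω X (Γ * Y) i j
  obtain ⟨hint_neg, hval_neg⟩ :=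
    integral_Ioi_cexp_mul_mul_exp_smul_mul_apply hM' (-ω) (X * Γ) Y i j
  have hω : Complex.I * ((-ω : ℝ) : ℂ) = -(Complex.I * ω) := by push_cast; ring
  rw [hω] at hint_neg hval_neg
  have heq_pos : EqOn (fun t : ℝ => Complex.exp (-(Complex.I * ω * t)) * G t i j)
      (fun t : ℝ => Complex.exp (-(Complex.I * ω * t)) * (X * exp (t • M) * (Γ * Y)) i j)
      (Ioi 0) := fun t ht => by simp only [hG_pos t ht, Matrix.mul_assoc]
  have heq_neg : EqOn (fun t : ℝ => Complex.exp (-(Complex.I * ω * ↑(-t))) * G (-t) i j)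
      (fun t : ℝ => Complex.exp (-(-(Complex.I * ω) * t)) * (X * Γ * exp (t • M') * Y) i j)
      (Ioi 0) := fun t ht => by simp only [hG_neg t ht, Complex.ofReal_neg, mul_neg, neg_mul]
  rw [integral_eq_integral_Ioi_add_integral_Ioi_comp_neg
      (hint_pos.congr_fun heq_pos.symm measurableSet_Ioi)
      (hint_neg.congr_fun heq_neg.symm measurableSet_Ioi),
    setIntegral_congr_fun measurableSet_Ioi heq_pos,
    setIntegral_congr_fun measurableSet_Ioi heq_neg,
    hval_pos, hval_neg, Matrix.add_apply, Matrix.mul_assoc _ Γ Y]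

theorem spectrum_transpose {R : Type*} [CommRing R] (M : Matrix n n R) :
    spectrum R Mᵀ = spectrum R M := by
  ext μ
  rw [spectrum.mem_iff, spectrum.mem_iff, ← isUnit_transpose, transpose_sub, transpose_transpose,
    Algebra.algebraMap_eq_smul_one, transpose_smul, transpose_one]

theorem exp_smul_map_algebraMap (M : Matrix n n ℝ) (t : ℝ) :
    (exp (t • M)).map (algebraMap ℝ ℂ) = exp (t • M.map (algebraMap ℝ ℂ)) := by
  have h : (algebraMap ℝ ℂ).mapMatrix (exp (t • M)) =
      exp ((algebraMap ℝ ℂ).mapMatrix (t • M)) :=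
    map_exp _ (continuous_id.matrix_map Complex.continuous_ofReal) _
  rw [← RingHom.mapMatrix_apply, h]
  congr 1
  ext
  simp

theorem inv_mul_mul_inv_eq_of_lyapunov {K : Type*} [CommRing K] {A A' Γ Q : Matrix n n K}
    (h : A * Γ + Γ * A' = -Q) (c : K) (hR : IsUnit (c • 1 - A)) (hS : IsUnit ((-c) • 1 - A')) :
    (c • 1 - A)⁻¹ * Q * ((-c) • 1 - A')⁻¹ = (c • 1 - A)⁻¹ * Γ + Γ * ((-c) • 1 - A')⁻¹ := by
  have hsylvester : (c • 1 - A) * Γ + Γ * ((-c) • 1 - A') = Q := by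
    rw [← neg_neg Q, ← h]
    simp only [Matrix.sub_mul, Matrix.mul_sub, Matrix.smul_mul, Matrix.mul_smul, Matrix.one_mul,
      Matrix.mul_one, neg_smul, Matrix.mul_neg]
    abel
  rw [← hsylvester, Matrix.mul_add, Matrix.add_mul, ← Matrix.mul_assoc,
    nonsing_inv_mul _ ((isUnit_iff_isUnit_det _).mp hR), Matrix.one_mul, Matrix.mul_assoc,
    Matrix.mul_assoc, mul_nonsing_inv _ ((isUnit_iff_isUnit_det _).mp hS), Matrix.mul_one, add_comm]

end Matrix

theorem transfer_function_eq_fourier_autocovariance_general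
    (N m d : ℕ) (A : Matrix (Fin N) (Fin N) ℝ) (B : Matrix (Fin N) (Fin m) ℝ)
    (C : Matrix (Fin d) (Fin N) ℝ) (Sig : Matrix (Fin m) (Fin m) ℝ)
    (hA : ∀ μ ∈ spectrum ℂ (A.map (algebraMap ℝ ℂ)), μ.re < 0)
    (Γ₀ : Matrix (Fin N) (Fin N) ℝ)
    (hLyap : A * Γ₀ + Γ₀ * Aᵀ = -(B * Sig * Bᵀ))
    (γ : ℝ → Matrix (Fin d) (Fin d) ℝ)
    (hγ : ∀ h : ℝ, γ h = if 0 ≤ h then C * NormedSpace.exp (h • A) * Γ₀ * Cᵀ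
      else C * Γ₀ * NormedSpace.exp ((-h) • Aᵀ) * Cᵀ) :
    ∀ ω : ℝ,
      ((2 * Real.pi : ℂ))⁻¹ •
        (C.map (algebraMap ℝ ℂ) *
          ((Complex.I * ω) • (1 : Matrix (Fin N) (Fin N) ℂ) - A.map (algebraMap ℝ ℂ))⁻¹ *
          B.map (algebraMap ℝ ℂ) * Sig.map (algebraMap ℝ ℂ) * (B.map (algebraMap ℝ ℂ))ᵀ *
          ((-(Complex.I * ω)) • (1 : Matrix (Fin N) (Fin N) ℂ) - (A.map (algebraMap ℝ ℂ))ᵀ)⁻¹ *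
          (C.map (algebraMap ℝ ℂ))ᵀ) =
      ((2 * Real.pi : ℂ))⁻¹ •
        Matrix.of (fun i j => ∫ t : ℝ, Complex.exp (-(Complex.I * ω * t)) * (γ t i j : ℂ)) := by
  intro ω
  set Aℂ := A.map (algebraMap ℝ ℂ)
  set Γℂ := Γ₀.map (algebraMap ℝ ℂ)
  set Cℂ := C.map (algebraMap ℝ ℂ)
  have hAT : ∀ μ ∈ spectrum ℂ Aℂᵀ, μ.re < 0 := by rwa [spectrum_transpose]
  have hLyapℂ : Aℂ * Γℂ + Γℂ * Aℂᵀ =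
      -(B.map (algebraMap ℝ ℂ) * Sig.map (algebraMap ℝ ℂ) * (B.map (algebraMap ℝ ℂ))ᵀ) := by
    simpa only [Matrix.map_add _ (map_add (algebraMap ℝ ℂ)),
      Matrix.map_neg _ (map_neg (algebraMap ℝ ℂ)), Matrix.map_mul, transpose_map] using congrArg (Matrix.map · (algebraMap ℝ ℂ)) hLyap
  have hγ_pos (t : ℝ) (ht : t > 0) :
      (γ t).map (algebraMap ℝ ℂ) = Cℂ * exp (t • Aℂ) * Γℂ * Cℂᵀ := by
    simp only [hγ t, if_pos ht.le, Matrix.map_mul, exp_smul_map_algebraMap, transpose_map,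
      Aℂ, Γℂ, Cℂ]
  have hγ_neg (t : ℝ) (ht : t > 0) :
      (γ (-t)).map (algebraMap ℝ ℂ) = Cℂ * Γℂ * exp (t • Aℂᵀ) * Cℂᵀ := by
    simp only [hγ (-t), if_neg (not_le.mpr (neg_neg_of_pos ht)), neg_neg, Matrix.map_mul,
      exp_smul_map_algebraMap, transpose_map, Aℂ, Γℂ, Cℂ]
  have hresolvent := congrArg (Cℂ * · * Cℂᵀ) (inv_mul_mul_inv_eq_of_lyapunov hLyapℂ (Complex.I * ω)
    (isUnit_smul_one_sub_of_re_eq_zero hA (by simp))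
    (isUnit_smul_one_sub_of_re_eq_zero hAT (by simp)))
  simp only [Matrix.mul_add, Matrix.add_mul, ← Matrix.mul_assoc] at hresolvent
  rw [hresolvent]
  congr 1
  ext i j
  rw [of_apply]
  exact (integral_cexp_mul_apply_eq_inv_add_inv hA hAT ω Cℂ Γℂ Cℂᵀ hγ_pos hγ_neg i j).symm

/-- Spectral density of the output of a stable continuous-time state space model: with
`Γ₀ = ∫₀^∞ e^{Au} B Σ Bᵀ e^{Aᵀu} du` satisfying the Lyapunov equation
`A Γ₀ + Γ₀ Aᵀ = -B Σ Bᵀ`, and autocovariance `γ(h) = C e^{Ah} Γ₀ Cᵀ` for `h ≥ 0`,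
`γ(h) = C Γ₀ e^{-Aᵀ h} Cᵀ` for `h < 0`, one has
`(2π)⁻¹ C (iω I - A)⁻¹ B Σ Bᵀ (-iω I - Aᵀ)⁻¹ Cᵀ = (2π)⁻¹ ∫ e^{-iωh} γ(h) dh` for all `ω`. -/
theorem transfer_function_eq_fourier_autocovariance
    (N m d : ℕ) (A : Matrix (Fin N) (Fin N) ℝ) (B : Matrix (Fin N) (Fin m) ℝ)
    (C : Matrix (Fin d) (Fin N) ℝ) (Sig : Matrix (Fin m) (Fin m) ℝ)
    (hSig : Sig.PosSemidef)
    (hA : ∀ μ ∈ spectrum ℂ (A.map (algebraMap ℝ ℂ)), μ.re < 0)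
    (Γ₀ : Matrix (Fin N) (Fin N) ℝ)
    (hΓ₀ : Γ₀ = Matrix.of fun i j =>
      ∫ u in Set.Ioi (0 : ℝ),
        (NormedSpace.exp (u • A) * B * Sig * Bᵀ * NormedSpace.exp (u • Aᵀ)) i j)
    (hLyap : A * Γ₀ + Γ₀ * Aᵀ = -(B * Sig * Bᵀ))
    (γ : ℝ → Matrix (Fin d) (Fin d) ℝ)
    (hγ : ∀ h : ℝ, γ h = if 0 ≤ h then C * NormedSpace.exp (h • A) * Γ₀ * Cᵀ
      else C * Γ₀ * NormedSpace.exp ((-h) • Aᵀ) * Cᵀ) :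
    ∀ ω : ℝ,
      ((2 * Real.pi : ℂ))⁻¹ •
        (C.map (algebraMap ℝ ℂ) *
          ((Complex.I * ω) • (1 : Matrix (Fin N) (Fin N) ℂ) - A.map (algebraMap ℝ ℂ))⁻¹ *
          B.map (algebraMap ℝ ℂ) * Sig.map (algebraMap ℝ ℂ) * (B.map (algebraMap ℝ ℂ))ᵀ *
          ((-(Complex.I * ω)) • (1 : Matrix (Fin N) (Fin N) ℂ) - (A.map (algebraMap ℝ ℂ))ᵀ)⁻¹ *
          (C.map (algebraMap ℝ ℂ))ᵀ) =
      ((2 * Real.pi : ℂ))⁻¹ •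
        Matrix.of (fun i j => ∫ t : ℝ, Complex.exp (-(Complex.I * ω * t)) * (γ t i j : ℂ)) :=
  transfer_function_eq_fourier_autocovariance_general N m d A B C Sig hA Γ₀ hLyap γ hγ
end
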